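/- In the lambda calculus with pair/fst/snd as above, the full PVS-Cert conversion ≡ (the equivalence generated by β, the fst-projection rule, and proof irrelevance of pairs) is contained in →_{βπ}* ∘ =_pi ∘ ←_{βπ}*: any two ≡-equivalent terms reduce by βπ to terms that are =_pi-equivalent. -/

import Mathlib

/-- Untyped λ-terms (de Bruijn) extended with a 4-ary pair constructor and
3-ary left/right projections. -/
inductive Tm : Type
  | var : Nat → Tm
  | app : Tm → Tm → Tm
  | lam : Tm → Tm → Tm                 -- λ(x : T). M
  | pair : Tm → Tm → Tm → Tm → Tm      -- ⟨T, P, m, h⟩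
  | fst : Tm → Tm → Tm → Tm            -- π₁(T, P, m)
  | snd : Tm → Tm → Tm → Tm            -- π₂(T, P, m)

namespace Tm

/-- Shift the free variables `≥ k` by `d`. -/
def lift (d k : Nat) : Tm → Tm
  | var n => if n < k then var n else var (n + d)
  | app m n => app (lift d k m) (lift d k n)
  | lam t m => lam (lift d k t) (lift d (k + 1) m)
  | pair t p m h => pair (lift d k t) (lift d k p) (lift d k m) (lift d k h)
  | fst t p m => fst (lift d k t) (lift d k p) (lift d k m)
  | snd t p m => snd (lift d k t) (lift d k p) (lift d k m)

/-- Capture-avoiding substitution of `s` for variable `k`. -/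
def subst (k : Nat) (s : Tm) : Tm → Tm
  | var n => if n = k then lift k 0 s else if k < n then var (n - 1) else var n
  | app m n => app (subst k s m) (subst k s n)
  | lam t m => lam (subst k s t) (subst (k + 1) s m)
  | pair t p m h => pair (subst k s t) (subst k s p) (subst k s m) (subst k s h)
  | fst t p m => fst (subst k s t) (subst k s p) (subst k s m)
  | snd t p m => snd (subst k s t) (subst k s p) (subst k s m)

/-- One-step βπ-reduction: β plus `fst(T₀,P₀,⟨T₁,P₁,m,h⟩) → m`,
closed under contexts. -/
inductive Step : Tm → Tm → Prop
  | beta (t m n : Tm) : Step (app (lam t m) n) (subst 0 n m)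
  | proj (t₀ p₀ t₁ p₁ m h : Tm) : Step (fst t₀ p₀ (pair t₁ p₁ m h)) m
  | appL {m m'} (n) : Step m m' → Step (app m n) (app m' n)
  | appR (m) {n n'} : Step n n' → Step (app m n) (app m n')
  | lamT {t t'} (m) : Step t t' → Step (lam t m) (lam t' m)
  | lamM (t) {m m'} : Step m m' → Step (lam t m) (lam t m')
  | pair₁ {t t'} (p m h) : Step t t' → Step (pair t p m h) (pair t' p m h)
  | pair₂ (t) {p p'} (m h) : Step p p' → Step (pair t p m h) (pair t p' m h)
  | pair₃ (t p) {m m'} (h) : Step m m' → Step (pair t p m h) (pair t p m' h)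
  | pair₄ (t p m) {h h'} : Step h h' → Step (pair t p m h) (pair t p m h')
  | fst₁ {t t'} (p m) : Step t t' → Step (fst t p m) (fst t' p m)
  | fst₂ (t) {p p'} (m) : Step p p' → Step (fst t p m) (fst t p' m)
  | fst₃ (t p) {m m'} : Step m m' → Step (fst t p m) (fst t p m')
  | snd₁ {t t'} (p m) : Step t t' → Step (snd t p m) (snd t' p m)
  | snd₂ (t) {p p'} (m) : Step p p' → Step (snd t p m) (snd t p' m)
  | snd₃ (t p) {m m'} : Step m m' → Step (snd t p m) (snd t p m')

/-- One-step proof-irrelevance relation: change the proof component of a pair,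
closed under contexts. It is symmetric by construction. -/
inductive PiStep : Tm → Tm → Prop
  | pi (t p m h₀ h₁ : Tm) : PiStep (pair t p m h₀) (pair t p m h₁)
  | appL {m m'} (n) : PiStep m m' → PiStep (app m n) (app m' n)
  | appR (m) {n n'} : PiStep n n' → PiStep (app m n) (app m n')
  | lamT {t t'} (m) : PiStep t t' → PiStep (lam t m) (lam t' m)
  | lamM (t) {m m'} : PiStep m m' → PiStep (lam t m) (lam t m')
  | pair₁ {t t'} (p m h) : PiStep t t' → PiStep (pair t p m h) (pair t' p m h)
  | pair₂ (t) {p p'} (m h) : PiStep p p' → PiStep (pair t p m h) (pair t p' m h)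
  | pair₃ (t p) {m m'} (h) : PiStep m m' → PiStep (pair t p m h) (pair t p m' h)
  | fst₁ {t t'} (p m) : PiStep t t' → PiStep (fst t p m) (fst t' p m)
  | fst₂ (t) {p p'} (m) : PiStep p p' → PiStep (fst t p m) (fst t p' m)
  | fst₃ (t p) {m m'} : PiStep m m' → PiStep (fst t p m) (fst t p m')
  | snd₁ {t t'} (p m) : PiStep t t' → PiStep (snd t p m) (snd t' p m)
  | snd₂ (t) {p p'} (m) : PiStep p p' → PiStep (snd t p m) (snd t p' m)
  | snd₃ (t p) {m m'} : PiStep m m' → PiStep (snd t p m) (snd t p m')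

end Tm

/-!
Parallel βπ-reduction `Par` has the diamond property (via Takahashi's complete development `cd`),
so βπ-reduction is confluent. Proof irrelevance, described structurally by `PiEq` (equality up to
the proof components of pairs), commutes with parallel reduction: neither β nor the projection
rule inspects a proof component, so every redex of a term is still a redex after changing proof
components. In a zig-zag of βπ-steps and =_pi-steps, peaks are therefore closed by confluence and
=_pi-steps are pushed past the reductions, leaving `t →* t' =_pi u' *← u`.
-/

open Relation

namespace Relation

variable {α : Type*} {r e : α → α → Prop}

theorem ReflTransGen.exists_of_commute (hc : ∀ {x x' y}, r x x' → e x y → ∃ y', r y y' ∧ e x' y')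
    {x x' y : α} (h : ReflTransGen r x x') (he : e x y) : ∃ y', ReflTransGen r y y' ∧ e x' y' := by
  induction h with
  | refl => exact ⟨y, .refl, he⟩
  | tail _ hx ih =>
    obtain ⟨z, hyz, hez⟩ := ih
    obtain ⟨y', hzy', he'⟩ := hc hx hez
    exact ⟨y', hyz.tail hzy', he'⟩

theorem EqvGen.exists_reflTransGen_of_diamond (hd : ∀ a b c, r a b → r a c → ∃ d, r b d ∧ r c d)
    (he : Equivalence e) (hc : ∀ {x x' y}, r x x' → e x y → ∃ y', r y y' ∧ e x' y') {a b : α}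
    (h : EqvGen (fun x y => r x y ∨ e x y) a b) :
    ∃ a' b', ReflTransGen r a a' ∧ e a' b' ∧ ReflTransGen r b b' := by
  induction h with
  | rel x y hxy =>
    rcases hxy with hr | he'
    · exact ⟨y, y, .single hr, he.refl y, .refl⟩
    · exact ⟨x, y, .refl, he', .refl⟩
  | refl x => exact ⟨x, x, .refl, he.refl x, .refl⟩
  | symm _ _ _ ih =>
    obtain ⟨x', y', hx, hxy, hy⟩ := ih
    exact ⟨y', x', hy, he.symm hxy, hx⟩
  | trans _ _ _ _ _ ih₁ ih₂ =>
    obtain ⟨x', y₁, hx, hxy, hy₁⟩ := ih₁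
    obtain ⟨y₂, z', hy₂, hyz, hz⟩ := ih₂
    obtain ⟨w, hy₁w, hy₂w⟩ := church_rosser
      (fun a b c hab hac => (hd a b c hab hac).imp fun _ h => ⟨.single h.1, .single h.2⟩) hy₁ hy₂
    obtain ⟨x'', hx'', hwx⟩ := hy₁w.exists_of_commute hc (he.symm hxy)
    obtain ⟨z'', hz'', hwz⟩ := hy₂w.exists_of_commute hc hyz
    exact ⟨x'', z'', hx.trans hx'', he.trans (he.symm hwx) hwz, hz.trans hz''⟩

end Relation

namespace Tm

theorem lift_lift (t : Tm) {d e k j : Nat} (h₁ : k ≤ j) (h₂ : j ≤ k + d) :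
    lift e j (lift d k t) = lift (d + e) k t := by
  induction t generalizing k j <;> grind [lift]

theorem lift_lift_comm (t : Tm) {d e k j : Nat} (h : j ≤ k) :
    lift e j (lift d k t) = lift d (k + e) (lift e j t) := by
  induction t generalizing k j <;> grind [lift]

theorem subst_lift_cancel (t s : Tm) {d k j : Nat} (h₁ : k ≤ j) (h₂ : j ≤ k + d) :
    subst j s (lift (d + 1) k t) = lift d k t := by
  induction t generalizing k j <;> grind [lift, subst]

theorem subst_lift_comm (t s : Tm) {d k j : Nat} (h : k ≤ j) :
    subst (j + d) s (lift d k t) = lift d k (subst j s t) := by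
  induction t generalizing k j <;> grind [lift, subst, lift_lift]

theorem lift_subst (t s : Tm) (d k j : Nat) :
    lift d (k + j) (subst j s t) = subst j (lift d k s) (lift d (k + j + 1) t) := by
  induction t generalizing j <;> grind [lift, subst, lift_lift_comm]

theorem subst_subst (t s n : Tm) (k j : Nat) :
    subst (j + k) s (subst j n t) = subst j (subst k s n) (subst (j + k + 1) s t) := by
  induction t generalizing j with
  | var v => grind [lift, subst, subst_lift_cancel, subst_lift_comm n s (Nat.zero_le k) (d := j)]
  | _ => grind [subst]

inductive Par : Tm → Tm → Prop
  | var (n) : Par (var n) (var n)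
  | app {m m' n n'} : Par m m' → Par n n' → Par (app m n) (app m' n')
  | lam {t t' m m'} : Par t t' → Par m m' → Par (lam t m) (lam t' m')
  | pair {t t' p p' m m' h h'} : Par t t' → Par p p' → Par m m' → Par h h' →
      Par (pair t p m h) (pair t' p' m' h')
  | fst {t t' p p' m m'} : Par t t' → Par p p' → Par m m' → Par (fst t p m) (fst t' p' m')
  | snd {t t' p p' m m'} : Par t t' → Par p p' → Par m m' → Par (snd t p m) (snd t' p' m')
  | beta (t) {m m' n n'} : Par m m' → Par n n' → Par (app (lam t m) n) (subst 0 n' m')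
  | proj (t₀ p₀ t₁ p₁ h) {m m'} : Par m m' → Par (fst t₀ p₀ (pair t₁ p₁ m h)) m'

namespace Par

theorem refl : ∀ t : Tm, Par t t
  | .var n => .var n
  | .app _ _ => .app (refl _) (refl _)
  | .lam _ _ => .lam (refl _) (refl _)
  | .pair _ _ _ _ => .pair (refl _) (refl _) (refl _) (refl _)
  | .fst _ _ _ => .fst (refl _) (refl _) (refl _)
  | .snd _ _ _ => .snd (refl _) (refl _) (refl _)

theorem lift {m m' : Tm} (h : Par m m') (d k : Nat) : Par (m.lift d k) (m'.lift d k) := by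
  induction h generalizing k with
  | var n => exact refl _
  | app _ _ ihm ihn => exact .app (ihm k) (ihn k)
  | lam _ _ iht ihm => exact .lam (iht k) (ihm (k + 1))
  | pair _ _ _ _ ih₁ ih₂ ih₃ ih₄ => exact .pair (ih₁ k) (ih₂ k) (ih₃ k) (ih₄ k)
  | fst _ _ _ ih₁ ih₂ ih₃ => exact .fst (ih₁ k) (ih₂ k) (ih₃ k)
  | snd _ _ _ ih₁ ih₂ ih₃ => exact .snd (ih₁ k) (ih₂ k) (ih₃ k)
  | @beta t _ m' _ n' _ _ ihm ihn =>
    rw [Tm.lift, Tm.lift, ← Nat.add_zero k, lift_subst m' n' d k 0]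
    exact .beta _ (ihm (k + 1)) (ihn k)
  | proj _ _ _ _ _ _ ihm => exact .proj _ _ _ _ _ (ihm k)

theorem subst {s s' m m' : Tm} (hs : Par s s') (h : Par m m') (k : Nat) :
    Par (Tm.subst k s m) (Tm.subst k s' m') := by
  induction h generalizing k with
  | var n =>
    simp only [Tm.subst]
    split_ifs
    exacts [hs.lift k 0, refl _, refl _]
  | app _ _ ihm ihn => exact .app (ihm k) (ihn k)
  | lam _ _ iht ihm => exact .lam (iht k) (ihm (k + 1))
  | pair _ _ _ _ ih₁ ih₂ ih₃ ih₄ => exact .pair (ih₁ k) (ih₂ k) (ih₃ k) (ih₄ k)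
  | fst _ _ _ ih₁ ih₂ ih₃ => exact .fst (ih₁ k) (ih₂ k) (ih₃ k)
  | snd _ _ _ ih₁ ih₂ ih₃ => exact .snd (ih₁ k) (ih₂ k) (ih₃ k)
  | @beta t _ m' _ n' _ _ ihm ihn =>
    have e : Tm.subst k s' (Tm.subst 0 n' m') =
        Tm.subst 0 (Tm.subst k s' n') (Tm.subst (k + 1) s' m') := by
      simpa using subst_subst m' s' n' k 0
    rw [Tm.subst, Tm.subst, e]
    exact .beta _ (ihm (k + 1)) (ihn k)
  | proj _ _ _ _ _ _ ihm => exact .proj _ _ _ _ _ (ihm k)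

end Par

def cd : Tm → Tm
  | var n => var n
  | app (lam _ m) n => subst 0 (cd n) (cd m)
  | app m n => app (cd m) (cd n)
  | lam t m => lam (cd t) (cd m)
  | pair t p m h => pair (cd t) (cd p) (cd m) (cd h)
  | fst _ _ (pair _ _ m _) => cd m
  | fst t p m => fst (cd t) (cd p) (cd m)
  | snd t p m => snd (cd t) (cd p) (cd m)

theorem Par.par_cd {a b : Tm} (h : Par a b) : Par b (cd a) := by
  induction h with
  | var n => exact .var n
  | app hm _ ihm ihn =>
    cases hm with
    | lam =>
      cases ihm with | lam _ ihq => exact .beta _ ihq ihn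
    | _ => exact .app ihm ihn
  | lam _ _ iht ihm => exact .lam iht ihm
  | pair _ _ _ _ ih₁ ih₂ ih₃ ih₄ => exact .pair ih₁ ih₂ ih₃ ih₄
  | fst _ _ hm iht ihp ihm =>
    cases hm with
    | pair =>
      cases ihm with | pair _ _ ihm _ => exact .proj _ _ _ _ _ ihm
    | _ => exact .fst iht ihp ihm
  | snd _ _ _ ih₁ ih₂ ih₃ => exact .snd ih₁ ih₂ ih₃
  | beta _ _ _ ihm ihn => exact ihn.subst ihm 0
  | proj _ _ _ _ _ _ ihm => exact ihm

theorem Par.diamond {a b c : Tm} (hb : Par a b) (hc : Par a c) : ∃ d, Par b d ∧ Par c d :=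
  ⟨cd a, hb.par_cd, hc.par_cd⟩

theorem Step.par {a b : Tm} (h : Step a b) : Par a b := by
  induction h with
  | beta t m n => exact .beta t (.refl m) (.refl n)
  | proj _ _ _ _ m _ => exact .proj _ _ _ _ _ (.refl m)
  | appL n _ ih => exact .app ih (.refl n)
  | appR m _ ih => exact .app (.refl m) ih
  | lamT m _ ih => exact .lam ih (.refl m)
  | lamM t _ ih => exact .lam (.refl t) ih
  | pair₁ p m h _ ih => exact .pair ih (.refl p) (.refl m) (.refl h)
  | pair₂ t m h _ ih => exact .pair (.refl t) ih (.refl m) (.refl h)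
  | pair₃ t p h _ ih => exact .pair (.refl t) (.refl p) ih (.refl h)
  | pair₄ t p m _ ih => exact .pair (.refl t) (.refl p) (.refl m) ih
  | fst₁ p m _ ih => exact .fst ih (.refl p) (.refl m)
  | fst₂ t m _ ih => exact .fst (.refl t) ih (.refl m)
  | fst₃ t p _ ih => exact .fst (.refl t) (.refl p) ih
  | snd₁ p m _ ih => exact .snd ih (.refl p) (.refl m)
  | snd₂ t m _ ih => exact .snd (.refl t) ih (.refl m)
  | snd₃ t p _ ih => exact .snd (.refl t) (.refl p) ih

theorem Par.reflTransGen_step {a b : Tm} (h : Par a b) : ReflTransGen Step a b := by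
  induction h with
  | var n => rfl
  | app _ _ ih₁ ih₂ =>
    exact (ih₁.lift (Tm.app · _) fun _ _ => .appL _).trans
      (ih₂.lift (Tm.app _ ·) fun _ _ => .appR _)
  | lam _ _ ih₁ ih₂ =>
    exact (ih₁.lift (Tm.lam · _) fun _ _ => .lamT _).trans
      (ih₂.lift (Tm.lam _ ·) fun _ _ => .lamM _)
  | pair _ _ _ _ ih₁ ih₂ ih₃ ih₄ =>
    exact (ih₁.lift (Tm.pair · _ _ _) fun _ _ => .pair₁ _ _ _).trans <|
      (ih₂.lift (Tm.pair _ · _ _) fun _ _ => .pair₂ _ _ _).trans <|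
      (ih₃.lift (Tm.pair _ _ · _) fun _ _ => .pair₃ _ _ _).trans <|
      ih₄.lift (Tm.pair _ _ _ ·) fun _ _ => .pair₄ _ _ _
  | fst _ _ _ ih₁ ih₂ ih₃ =>
    exact (ih₁.lift (Tm.fst · _ _) fun _ _ => .fst₁ _ _).trans <|
      (ih₂.lift (Tm.fst _ · _) fun _ _ => .fst₂ _ _).trans <|
      ih₃.lift (Tm.fst _ _ ·) fun _ _ => .fst₃ _ _
  | snd _ _ _ ih₁ ih₂ ih₃ =>
    exact (ih₁.lift (Tm.snd · _ _) fun _ _ => .snd₁ _ _).trans <|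
      (ih₂.lift (Tm.snd _ · _) fun _ _ => .snd₂ _ _).trans <|
      ih₃.lift (Tm.snd _ _ ·) fun _ _ => .snd₃ _ _
  | beta t _ _ ihm ihn =>
    exact ((ihm.lift (fun x => Tm.app (Tm.lam t x) _) fun _ _ h => .appL _ (.lamM t h)).trans
      (ihn.lift (Tm.app _ ·) fun _ _ => .appR _)).tail (Step.beta _ _ _)
  | proj _ _ _ _ _ _ ihm =>
    exact (ihm.lift (Tm.fst _ _ <| Tm.pair _ _ · _) fun _ _ h => .fst₃ _ _ (.pair₃ _ _ _ h)).tail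
      (Step.proj _ _ _ _ _ _)

inductive PiEq : Tm → Tm → Prop
  | var (n) : PiEq (var n) (var n)
  | app {m m' n n'} : PiEq m m' → PiEq n n' → PiEq (app m n) (app m' n')
  | lam {t t' m m'} : PiEq t t' → PiEq m m' → PiEq (lam t m) (lam t' m')
  | pair {t t' p p' m m'} (h h') : PiEq t t' → PiEq p p' → PiEq m m' →
      PiEq (pair t p m h) (pair t' p' m' h')
  | fst {t t' p p' m m'} : PiEq t t' → PiEq p p' → PiEq m m' → PiEq (fst t p m) (fst t' p' m')
  | snd {t t' p p' m m'} : PiEq t t' → PiEq p p' → PiEq m m' → PiEq (snd t p m) (snd t' p' m')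

namespace PiEq

theorem refl : ∀ t : Tm, PiEq t t
  | .var n => .var n
  | .app _ _ => .app (refl _) (refl _)
  | .lam _ _ => .lam (refl _) (refl _)
  | .pair _ _ _ _ => .pair _ _ (refl _) (refl _) (refl _)
  | .fst _ _ _ => .fst (refl _) (refl _) (refl _)
  | .snd _ _ _ => .snd (refl _) (refl _) (refl _)

theorem symm {a b : Tm} (h : PiEq a b) : PiEq b a := by
  induction h with
  | var n => exact .var n
  | app _ _ ih₁ ih₂ => exact .app ih₁ ih₂
  | lam _ _ ih₁ ih₂ => exact .lam ih₁ ih₂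
  | pair h h' _ _ _ ih₁ ih₂ ih₃ => exact .pair h' h ih₁ ih₂ ih₃
  | fst _ _ _ ih₁ ih₂ ih₃ => exact .fst ih₁ ih₂ ih₃
  | snd _ _ _ ih₁ ih₂ ih₃ => exact .snd ih₁ ih₂ ih₃

theorem trans {a b c : Tm} (h₁ : PiEq a b) (h₂ : PiEq b c) : PiEq a c := by
  induction h₁ generalizing c with
  | var n => exact h₂
  | app _ _ ih₁ ih₂ => cases h₂ with | app h₁ h₂ => exact .app (ih₁ h₁) (ih₂ h₂)
  | lam _ _ ih₁ ih₂ => cases h₂ with | lam h₁ h₂ => exact .lam (ih₁ h₁) (ih₂ h₂)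
  | pair _ _ _ _ _ ih₁ ih₂ ih₃ =>
    cases h₂ with | pair _ _ h₁ h₂ h₃ => exact .pair _ _ (ih₁ h₁) (ih₂ h₂) (ih₃ h₃)
  | fst _ _ _ ih₁ ih₂ ih₃ =>
    cases h₂ with | fst h₁ h₂ h₃ => exact .fst (ih₁ h₁) (ih₂ h₂) (ih₃ h₃)
  | snd _ _ _ ih₁ ih₂ ih₃ =>
    cases h₂ with | snd h₁ h₂ h₃ => exact .snd (ih₁ h₁) (ih₂ h₂) (ih₃ h₃)

theorem equivalence : Equivalence PiEq := ⟨refl, symm, trans⟩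

theorem lift {a b : Tm} (h : PiEq a b) (d k : Nat) : PiEq (a.lift d k) (b.lift d k) := by
  induction h generalizing k with
  | var n => exact refl _
  | app _ _ ih₁ ih₂ => exact .app (ih₁ k) (ih₂ k)
  | lam _ _ ih₁ ih₂ => exact .lam (ih₁ k) (ih₂ (k + 1))
  | pair _ _ _ _ _ ih₁ ih₂ ih₃ => exact .pair _ _ (ih₁ k) (ih₂ k) (ih₃ k)
  | fst _ _ _ ih₁ ih₂ ih₃ => exact .fst (ih₁ k) (ih₂ k) (ih₃ k)
  | snd _ _ _ ih₁ ih₂ ih₃ => exact .snd (ih₁ k) (ih₂ k) (ih₃ k)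

theorem subst {s s' a b : Tm} (hs : PiEq s s') (h : PiEq a b) (k : Nat) :
    PiEq (Tm.subst k s a) (Tm.subst k s' b) := by
  induction h generalizing k with
  | var n =>
    simp only [Tm.subst]
    split_ifs
    exacts [hs.lift k 0, refl _, refl _]
  | app _ _ ih₁ ih₂ => exact .app (ih₁ k) (ih₂ k)
  | lam _ _ ih₁ ih₂ => exact .lam (ih₁ k) (ih₂ (k + 1))
  | pair _ _ _ _ _ ih₁ ih₂ ih₃ => exact .pair _ _ (ih₁ k) (ih₂ k) (ih₃ k)
  | fst _ _ _ ih₁ ih₂ ih₃ => exact .fst (ih₁ k) (ih₂ k) (ih₃ k)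
  | snd _ _ _ ih₁ ih₂ ih₃ => exact .snd (ih₁ k) (ih₂ k) (ih₃ k)

theorem reflTransGen_piStep {a b : Tm} (h : PiEq a b) : ReflTransGen PiStep a b := by
  induction h with
  | var n => rfl
  | app _ _ ih₁ ih₂ =>
    exact (ih₁.lift (Tm.app · _) fun _ _ => .appL _).trans
      (ih₂.lift (Tm.app _ ·) fun _ _ => .appR _)
  | lam _ _ ih₁ ih₂ =>
    exact (ih₁.lift (Tm.lam · _) fun _ _ => .lamT _).trans
      (ih₂.lift (Tm.lam _ ·) fun _ _ => .lamM _)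
  | pair h _ _ _ _ ih₁ ih₂ ih₃ =>
    exact ((ih₁.lift (Tm.pair · _ _ h) fun _ _ => .pair₁ _ _ _).trans <|
      (ih₂.lift (Tm.pair _ · _ h) fun _ _ => .pair₂ _ _ _).trans <|
      ih₃.lift (Tm.pair _ _ · h) fun _ _ => .pair₃ _ _ _).tail (.pi _ _ _ _ _)
  | fst _ _ _ ih₁ ih₂ ih₃ =>
    exact (ih₁.lift (Tm.fst · _ _) fun _ _ => .fst₁ _ _).trans <|
      (ih₂.lift (Tm.fst _ · _) fun _ _ => .fst₂ _ _).trans <|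
      ih₃.lift (Tm.fst _ _ ·) fun _ _ => .fst₃ _ _
  | snd _ _ _ ih₁ ih₂ ih₃ =>
    exact (ih₁.lift (Tm.snd · _ _) fun _ _ => .snd₁ _ _).trans <|
      (ih₂.lift (Tm.snd _ · _) fun _ _ => .snd₂ _ _).trans <|
      ih₃.lift (Tm.snd _ _ ·) fun _ _ => .snd₃ _ _

end PiEq

theorem PiStep.piEq {a b : Tm} (h : PiStep a b) : PiEq a b := by
  induction h with
  | pi t p m h₀ h₁ => exact .pair h₀ h₁ (.refl t) (.refl p) (.refl m)
  | appL n _ ih => exact .app ih (.refl n)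
  | appR m _ ih => exact .app (.refl m) ih
  | lamT m _ ih => exact .lam ih (.refl m)
  | lamM t _ ih => exact .lam (.refl t) ih
  | pair₁ p m h _ ih => exact .pair h h ih (.refl p) (.refl m)
  | pair₂ t m h _ ih => exact .pair h h (.refl t) ih (.refl m)
  | pair₃ t p h _ ih => exact .pair h h (.refl t) (.refl p) ih
  | fst₁ p m _ ih => exact .fst ih (.refl p) (.refl m)
  | fst₂ t m _ ih => exact .fst (.refl t) ih (.refl m)
  | fst₃ t p _ ih => exact .fst (.refl t) (.refl p) ih
  | snd₁ p m _ ih => exact .snd ih (.refl p) (.refl m)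
  | snd₂ t m _ ih => exact .snd (.refl t) ih (.refl m)
  | snd₃ t p _ ih => exact .snd (.refl t) (.refl p) ih

theorem Par.exists_of_piEq {x x' y : Tm} (hx : Par x x') (hxy : PiEq x y) :
    ∃ y', Par y y' ∧ PiEq x' y' := by
  induction hx generalizing y with
  | var n => exact ⟨y, .refl y, hxy⟩
  | app _ _ ih₁ ih₂ =>
    cases hxy with | app h₁ h₂ => ?_
    obtain ⟨_, hp₁, he₁⟩ := ih₁ h₁
    obtain ⟨_, hp₂, he₂⟩ := ih₂ h₂
    exact ⟨_, .app hp₁ hp₂, .app he₁ he₂⟩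
  | lam _ _ ih₁ ih₂ =>
    cases hxy with | lam h₁ h₂ => ?_
    obtain ⟨_, hp₁, he₁⟩ := ih₁ h₁
    obtain ⟨_, hp₂, he₂⟩ := ih₂ h₂
    exact ⟨_, .lam hp₁ hp₂, .lam he₁ he₂⟩
  | pair _ _ _ _ ih₁ ih₂ ih₃ =>
    cases hxy with | pair _ h h₁ h₂ h₃ => ?_
    obtain ⟨_, hp₁, he₁⟩ := ih₁ h₁
    obtain ⟨_, hp₂, he₂⟩ := ih₂ h₂
    obtain ⟨_, hp₃, he₃⟩ := ih₃ h₃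
    exact ⟨_, .pair hp₁ hp₂ hp₃ (.refl h), .pair _ _ he₁ he₂ he₃⟩
  | fst _ _ _ ih₁ ih₂ ih₃ =>
    cases hxy with | fst h₁ h₂ h₃ => ?_
    obtain ⟨_, hp₁, he₁⟩ := ih₁ h₁
    obtain ⟨_, hp₂, he₂⟩ := ih₂ h₂
    obtain ⟨_, hp₃, he₃⟩ := ih₃ h₃
    exact ⟨_, .fst hp₁ hp₂ hp₃, .fst he₁ he₂ he₃⟩
  | snd _ _ _ ih₁ ih₂ ih₃ =>
    cases hxy with | snd h₁ h₂ h₃ => ?_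
    obtain ⟨_, hp₁, he₁⟩ := ih₁ h₁
    obtain ⟨_, hp₂, he₂⟩ := ih₂ h₂
    obtain ⟨_, hp₃, he₃⟩ := ih₃ h₃
    exact ⟨_, .snd hp₁ hp₂ hp₃, .snd he₁ he₂ he₃⟩
  | beta _ _ _ ihm ihn =>
    cases hxy with | app hl hn => ?_
    cases hl with | lam _ hm => ?_
    obtain ⟨_, hpm, hem⟩ := ihm hm
    obtain ⟨_, hpn, hen⟩ := ihn hn
    exact ⟨_, .beta _ hpm hpn, hen.subst hem 0⟩
  | proj _ _ _ _ _ _ ih =>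
    cases hxy with | fst _ _ hp => ?_
    cases hp with | pair _ _ _ _ hm => ?_
    obtain ⟨_, hpm, hem⟩ := ih hm
    exact ⟨_, .proj _ _ _ _ _ hpm, hem⟩

end Tm

/-- The full PVS-Cert conversion — the equivalence generated by β, projection
and proof irrelevance — is contained in `→βπ* ∘ =pi ∘ ←βπ*`. -/
theorem Tm.conversion_decomposition :
    ∀ t u : Tm, EqvGen (fun x y => Tm.Step x y ∨ Tm.PiStep x y) t u →
      ∃ t' u', ReflTransGen Tm.Step t t' ∧ ReflTransGen Tm.PiStep t' u' ∧
        ReflTransGen Tm.Step u u' := by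
  intro t u h
  have h' : EqvGen (fun x y => Tm.Par x y ∨ Tm.PiEq x y) t u :=
    EqvGen.mono (fun _ _ => Or.imp Tm.Step.par Tm.PiStep.piEq) _ _ h
  obtain ⟨t', u', ht, htu, hu⟩ := EqvGen.exists_reflTransGen_of_diamond
    (fun _ _ _ => Tm.Par.diamond) Tm.PiEq.equivalence Tm.Par.exists_of_piEq h'
  have hsteps : ∀ {a b}, ReflTransGen Tm.Par a b → ReflTransGen Tm.Step a b :=
    reflTransGen_closed (fun _ _ => Tm.Par.reflTransGen_step) _ _
  exact ⟨t', u', hsteps ht, htu.reflTransGen_piStep, hsteps hu⟩
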